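/- arXiv:2302.06453 — 2 statements merged into one kernel-verified Lean document; each statement's English description precedes it below -/
import Mathlib

section
/- Assume a : [0,1] → ℝ is continuous on [0,1], a(0)=0, a>0 on (0,1], and there exists K ∈ (0,2) such that x ↦ x^K/a(x) is non-decreasing in a right neighbourhood of x = 0. Then there exists a constant C > 0 such that for every u ∈ H¹(0,1) with u(0) = u(1) = 0 and ∫₀¹ u(x)²/a(x) dx < ∞, one has ∫₀¹ u(x)²/a(x) dx ≤ C ∫₀¹ u'(x)² dx. In particular, on the space H¹_{1/a}(0,1) := {u ∈ H¹(0,1) : u(0)=u(1)=0, ∫₀¹ u²/a dx < ∞} the norms (∫₀¹ u²/a dx + ∫₀¹ (u')² dx)^{1/2} and (∫₀¹ (u')² dx)^{1/2} are equivalent. -/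
open MeasureTheory Set Filter Topology

noncomputable section

/-- Hypothesis on the degenerate coefficient `a`: continuous on `[0,1]`, `a(0) = 0`,
`a > 0` on `(0,1]`, and for some `K ∈ (0,2)` the map `x ↦ x^K / a(x)` is non-decreasing
in a right neighbourhood of `0`. -/
def DegenHyp (a : ℝ → ℝ) : Prop :=
  ContinuousOn a (Set.Icc 0 1) ∧ a 0 = 0 ∧ (∀ x ∈ Set.Ioc (0:ℝ) 1, 0 < a x) ∧
  ∃ K : ℝ, 0 < K ∧ K < 2 ∧
    ∃ ε > (0:ℝ), MonotoneOn (fun x : ℝ => x ^ K / a x) (Set.Ioc 0 ε)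

/-- `u ∈ H¹_{1/a}(0,1)`: `u` is absolutely continuous on `[0,1]` with derivative `u' ∈ L²(0,1)`,
`u(0) = u(1) = 0`, and `∫₀¹ u²/a < ∞`. -/
def MemH1w (a u u' : ℝ → ℝ) : Prop :=
  IntervalIntegrable u' MeasureTheory.volume 0 1 ∧
  MeasureTheory.IntegrableOn (fun x => u' x ^ 2) (Set.Ioc 0 1) ∧
  (∀ x ∈ Set.Icc (0:ℝ) 1, u x = u 0 + ∫ s in (0:ℝ)..x, u' s) ∧
  u 0 = 0 ∧ u 1 = 0 ∧
  MeasureTheory.IntegrableOn (fun x => u x ^ 2 / a x) (Set.Ioc 0 1)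

lemma cs_aux {f : ℝ → ℝ} {x : ℝ} (hx : 0 < x)
    (hf : IntegrableOn f (Ioc 0 x))
    (hf2 : IntegrableOn (fun t => f t ^ 2) (Ioc 0 x)) :
    (∫ t in Ioc 0 x, |f t|) ^ 2 ≤ x * ∫ t in Ioc 0 x, f t ^ 2 := by
  set J1 := ∫ t in Ioc 0 x, |f t| with hJ1
  set J2 := ∫ t in Ioc 0 x, f t ^ 2 with hJ2
  set c : ℝ := J1 / x with hc
  have habs : IntegrableOn (fun t => |f t|) (Ioc 0 x) := hf.abs
  have hmeas : (volume (Ioc (0:ℝ) x)).toReal = x := by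
    simp [Real.volume_Ioc, hx.le]
  have hint1 : IntegrableOn (fun t => f t ^ 2 - 2 * c * |f t|) (Ioc 0 x) :=
    hf2.sub (habs.const_mul (2 * c))
  have hintc : IntegrableOn (fun _ : ℝ => c ^ 2) (Ioc 0 x) :=
    integrableOn_const (by simp [Real.volume_Ioc])
  have key : (0:ℝ) ≤ J2 - 2 * c * J1 + c ^ 2 * x := by
    have h0 : (0:ℝ) ≤ ∫ t in Ioc 0 x, (|f t| - c) ^ 2 := by
      apply setIntegral_nonneg measurableSet_Ioc
      intro t _; positivity
    have hexp : (fun t => (|f t| - c) ^ 2)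
        = fun t => (f t ^ 2 - 2 * c * |f t|) + c ^ 2 := by
      funext t
      nlinarith [sq_abs (f t)]
    rw [hexp] at h0
    rw [integral_add hint1 hintc, integral_sub hf2 (habs.const_mul (2*c)),
      integral_const_mul, setIntegral_const, measureReal_def, hmeas] at h0
    simp only [smul_eq_mul] at h0
    rw [hJ1, hJ2]; linarith
  have hx' : x ≠ 0 := ne_of_gt hx
  have e : J2 - 2 * c * J1 + c ^ 2 * x = J2 - J1 ^ 2 / x := by
    rw [hc]; field_simp; ring
  rw [e] at key
  have h3 : J1 ^ 2 / x ≤ J2 := by linarith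
  have := (div_le_iff₀ hx).mp h3
  linarith [this]


/-- Hardy-type inequality: there is `C > 0` such that every `u ∈ H¹_{1/a}(0,1)` satisfies
`∫₀¹ u²/a ≤ C ∫₀¹ (u')²`; in particular the norms `(∫ u²/a + ∫ (u')²)^{1/2}` and
`(∫ (u')²)^{1/2}` are equivalent on `H¹_{1/a}(0,1)`. -/
theorem hardy_H1_weighted (a : ℝ → ℝ) (ha : DegenHyp a) :
    ∃ C > (0:ℝ), ∀ u u' : ℝ → ℝ, MemH1w a u u' →
      ((∫ x in Set.Ioc (0:ℝ) 1, u x ^ 2 / a x) ≤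
        C * ∫ x in Set.Ioc (0:ℝ) 1, u' x ^ 2) ∧
      ((∫ x in Set.Ioc (0:ℝ) 1, u' x ^ 2) ≤
        (∫ x in Set.Ioc (0:ℝ) 1, u x ^ 2 / a x) + ∫ x in Set.Ioc (0:ℝ) 1, u' x ^ 2) ∧
      ((∫ x in Set.Ioc (0:ℝ) 1, u x ^ 2 / a x) + (∫ x in Set.Ioc (0:ℝ) 1, u' x ^ 2) ≤
        (1 + C) * ∫ x in Set.Ioc (0:ℝ) 1, u' x ^ 2) := by
  obtain ⟨hcont, ha0, hapos, K, hK0, hK2, ε, hεpos, hmono⟩ := ha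
  set ε' : ℝ := min ε 1 with hε'def
  have hε'pos : 0 < ε' := lt_min hεpos one_pos
  have hε'le1 : ε' ≤ 1 := min_le_right _ _
  have hε'leε : ε' ≤ ε := min_le_left _ _
  have haε' : 0 < a ε' := hapos ε' ⟨hε'pos, hε'le1⟩
  set c : ℝ := ε' ^ K / a ε' with hcdef
  have hcpos : 0 < c := div_pos (Real.rpow_pos_of_pos hε'pos K) haε'
  -- minimum of a on [ε', 1]
  obtain ⟨z, hz, hzmin⟩ := isCompact_Icc.exists_isMinOn (α := ℝ) (β := ℝ)
    (Set.nonempty_Icc.2 hε'le1) (hcont.mono (Icc_subset_Icc hε'pos.le le_rfl))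
  set m : ℝ := a z with hmdef
  have hmpos : 0 < m := hapos z ⟨lt_of_lt_of_le hε'pos hz.1, hz.2⟩
  -- the rpow integral near 0
  have hrpow_int : IntegrableOn (fun x : ℝ => x ^ (1 - K)) (Ioc 0 ε') := by
    have h1 : (-1:ℝ) < 1 - K := by linarith
    have := (intervalIntegral.intervalIntegrable_rpow' (a := 0) (b := ε') h1)
    rwa [intervalIntegrable_iff_integrableOn_Ioc_of_le hε'pos.le] at this
  set J : ℝ := ∫ x in Ioc 0 ε', x ^ (1 - K) with hJdef
  have hJ0 : 0 ≤ J := setIntegral_nonneg measurableSet_Ioc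
    (fun x hx => Real.rpow_nonneg hx.1.le _)
  refine ⟨c * J + 1 / m + 1, by positivity, ?_⟩
  intro u u' hu
  obtain ⟨hu'i, hu'2, hrep, hu0, hu1, hua⟩ := hu
  set I : ℝ := ∫ x in Ioc (0:ℝ) 1, u' x ^ 2 with hIdef
  have hI0 : 0 ≤ I := setIntegral_nonneg measurableSet_Ioc (fun x _ => sq_nonneg _)
  have hu'int : IntegrableOn u' (Ioc 0 1) := by
    rwa [intervalIntegrable_iff_integrableOn_Ioc_of_le (by norm_num)] at hu'i
  -- pointwise bound u(x)^2 ≤ x * I on (0,1]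
  have hpt : ∀ x ∈ Ioc (0:ℝ) 1, u x ^ 2 ≤ x * I := by
    intro x hx
    have hx0 : 0 < x := hx.1
    have hsub : Ioc (0:ℝ) x ⊆ Ioc 0 1 := Ioc_subset_Ioc le_rfl hx.2
    have hrepx : u x = ∫ t in Ioc 0 x, u' t := by
      rw [hrep x ⟨hx0.le, hx.2⟩, hu0, zero_add,
        intervalIntegral.integral_of_le hx0.le]
    have habs : |u x| ≤ ∫ t in Ioc 0 x, |u' t| := by
      rw [hrep x ⟨hx0.le, hx.2⟩, hu0, zero_add,
        ← intervalIntegral.integral_of_le (f := fun t => |u' t|) hx0.le]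
      exact intervalIntegral.abs_integral_le_integral_abs hx0.le
    have hcs := cs_aux hx0 (hu'int.mono_set hsub) (hu'2.mono_set hsub)
    have h1 : u x ^ 2 ≤ (∫ t in Ioc 0 x, |u' t|) ^ 2 := by
      rw [← sq_abs (u x)]
      exact pow_le_pow_left₀ (abs_nonneg _) habs 2
    have h2 : (∫ t in Ioc 0 x, u' t ^ 2) ≤ I := by
      apply setIntegral_mono_set hu'2
      · filter_upwards with t using sq_nonneg _
      · exact HasSubset.Subset.eventuallyLE hsub
    calc u x ^ 2 ≤ (∫ t in Ioc 0 x, |u' t|) ^ 2 := h1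
      _ ≤ x * ∫ t in Ioc 0 x, u' t ^ 2 := hcs
      _ ≤ x * I := by nlinarith
  -- part 1 : on (0, ε']
  have hsub1 : Ioc (0:ℝ) ε' ⊆ Ioc 0 1 := Ioc_subset_Ioc le_rfl hε'le1
  have hsub2 : Ioc ε' (1:ℝ) ⊆ Ioc 0 1 := Ioc_subset_Ioc hε'pos.le le_rfl
  have hpart1 : (∫ x in Ioc 0 ε', u x ^ 2 / a x) ≤ c * I * J := by
    have hb : ∀ x ∈ Ioc (0:ℝ) ε', u x ^ 2 / a x ≤ (c * I) * x ^ (1 - K) := by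
      intro x hx
      have hx0 : 0 < x := hx.1
      have hax : 0 < a x := hapos x ⟨hx0, hx.2.trans hε'le1⟩
      have hxK : 0 < x ^ K := Real.rpow_pos_of_pos hx0 K
      have hmle : x ^ K / a x ≤ ε' ^ K / a ε' :=
        hmono ⟨hx0, hx.2.trans hε'leε⟩ ⟨hε'pos, hε'leε⟩ hx.2
      have e1 : u x ^ 2 / a x = (u x ^ 2 / x ^ K) * (x ^ K / a x) := by
        field_simp
      have e2 : x ^ (1 - K : ℝ) = x / x ^ K := by
        rw [Real.rpow_sub hx0, Real.rpow_one]
      calc u x ^ 2 / a x = (u x ^ 2 / x ^ K) * (x ^ K / a x) := e1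
        _ ≤ (u x ^ 2 / x ^ K) * c := by
            apply mul_le_mul_of_nonneg_left hmle (by positivity)
        _ ≤ ((x * I) / x ^ K) * c := by
            apply mul_le_mul_of_nonneg_right _ hcpos.le
            gcongr
            exact hpt x (hsub1 hx)
        _ = (c * I) * x ^ (1 - K) := by rw [e2]; field_simp
    have hgint : IntegrableOn (fun x : ℝ => (c * I) * x ^ (1 - K)) (Ioc 0 ε') :=
      hrpow_int.const_mul _
    calc (∫ x in Ioc 0 ε', u x ^ 2 / a x)
        ≤ ∫ x in Ioc 0 ε', (c * I) * x ^ (1 - K) :=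
          setIntegral_mono_on (hua.mono_set hsub1) hgint measurableSet_Ioc hb
      _ = (c * I) * J := by rw [integral_const_mul]
      _ = c * I * J := by ring
  -- part 2 : on (ε', 1]
  have hpart2 : (∫ x in Ioc ε' 1, u x ^ 2 / a x) ≤ (1 / m) * I := by
    have hb : ∀ x ∈ Ioc ε' (1:ℝ), u x ^ 2 / a x ≤ I / m := by
      intro x hx
      have hxmem : x ∈ Ioc (0:ℝ) 1 := hsub2 hx
      have hu2 : u x ^ 2 ≤ I := (hpt x hxmem).trans (by nlinarith [hxmem.2, hI0])
      have ham : m ≤ a x := hzmin ⟨hx.1.le, hx.2⟩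
      exact div_le_div₀ hI0 hu2 hmpos ham
    calc (∫ x in Ioc ε' 1, u x ^ 2 / a x)
        ≤ ∫ _x in Ioc ε' 1, I / m :=
          setIntegral_mono_on (hua.mono_set hsub2)
            (integrableOn_const (by simp [Real.volume_Ioc])) measurableSet_Ioc hb
      _ = ((volume (Ioc ε' (1:ℝ))).toReal) * (I / m) := by
          rw [setIntegral_const, smul_eq_mul, measureReal_def]
      _ ≤ 1 * (I / m) := by
          apply mul_le_mul_of_nonneg_right _ (by positivity)
          rw [Real.volume_Ioc]
          rw [ENNReal.toReal_ofReal (by linarith)]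
          linarith
      _ = (1 / m) * I := by ring
  -- splitting
  have hsplit : (∫ x in Ioc (0:ℝ) 1, u x ^ 2 / a x)
      = (∫ x in Ioc 0 ε', u x ^ 2 / a x) + ∫ x in Ioc ε' 1, u x ^ 2 / a x := by
    rw [← setIntegral_union (Ioc_disjoint_Ioc_of_le le_rfl) measurableSet_Ioc
      (hua.mono_set hsub1) (hua.mono_set hsub2),
      Ioc_union_Ioc_eq_Ioc hε'pos.le hε'le1]
  have hwnn : 0 ≤ ∫ x in Ioc (0:ℝ) 1, u x ^ 2 / a x :=
    setIntegral_nonneg measurableSet_Ioc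
      (fun x hx => div_nonneg (sq_nonneg _) (hapos x hx).le)
  have hmain : (∫ x in Ioc (0:ℝ) 1, u x ^ 2 / a x) ≤ (c * J + 1 / m + 1) * I := by
    rw [hsplit]
    nlinarith [hpart1, hpart2, hI0]
  exact ⟨hmain, le_add_of_nonneg_left hwnn, by nlinarith [hmain, hI0]⟩
end
end

section
/- Assume a : [0,1] → ℝ is continuous on [0,1], a(0)=0, a>0 on (0,1], and there exists K ∈ (0,2) such that x ↦ x^K/a(x) is non-decreasing in a right neighbourhood of x = 0. Then there exists a constant C > 0 such that for every u ∈ H²(0,1) with u(0)=u(1)=u'(0)=u'(1)=0 and ∫₀¹ u(x)²/a(x) dx < ∞, one has ∫₀¹ u(x)²/a(x) dx + ∫₀¹ u'(x)² dx ≤ C ∫₀¹ u''(x)² dx. In particular, on the space H²_{1/a}(0,1) := {u ∈ H²(0,1) : u(0)=u(1)=u'(0)=u'(1)=0, ∫₀¹ u²/a dx < ∞} the norms (∫₀¹ u²/a dx + ∫₀¹ (u')² dx + ∫₀¹ (u'')² dx)^{1/2} and (∫₀¹ (u'')² dx)^{1/2} are equivalent. -/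
open MeasureTheory Set Filter Topology

noncomputable section

/-- `u ∈ H²_{1/a}(0,1)`: `u, u'` are absolutely continuous on `[0,1]` with `u'' ∈ L²(0,1)`,
`u(0) = u(1) = u'(0) = u'(1) = 0`, and `∫₀¹ u²/a < ∞`. -/
def MemH2w (a u u' u'' : ℝ → ℝ) : Prop :=
  IntervalIntegrable u'' MeasureTheory.volume 0 1 ∧
  MeasureTheory.IntegrableOn (fun x => u'' x ^ 2) (Set.Ioc 0 1) ∧
  (∀ x ∈ Set.Icc (0:ℝ) 1, u' x = u' 0 + ∫ s in (0:ℝ)..x, u'' s) ∧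
  (∀ x ∈ Set.Icc (0:ℝ) 1, u x = u 0 + ∫ s in (0:ℝ)..x, u' s) ∧
  u 0 = 0 ∧ u 1 = 0 ∧ u' 0 = 0 ∧ u' 1 = 0 ∧
  MeasureTheory.IntegrableOn (fun x => u x ^ 2 / a x) (Set.Ioc 0 1)

set_option maxHeartbeats 1000000 in
/-- Second-order Hardy-type inequality: there is `C > 0` such that every
`u ∈ H²_{1/a}(0,1)` satisfies `∫₀¹ u²/a + ∫₀¹ (u')² ≤ C ∫₀¹ (u'')²`; in particular the
norms `(∫ u²/a + ∫ (u')² + ∫ (u'')²)^{1/2}` and `(∫ (u'')²)^{1/2}` are equivalent on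
`H²_{1/a}(0,1)`. -/
theorem hardy_H2_weighted (a : ℝ → ℝ) (ha : DegenHyp a) :
    ∃ C > (0:ℝ), ∀ u u' u'' : ℝ → ℝ, MemH2w a u u' u'' →
      ((∫ x in Set.Ioc (0:ℝ) 1, u x ^ 2 / a x) + (∫ x in Set.Ioc (0:ℝ) 1, u' x ^ 2) ≤
        C * ∫ x in Set.Ioc (0:ℝ) 1, u'' x ^ 2) ∧
      ((∫ x in Set.Ioc (0:ℝ) 1, u'' x ^ 2) ≤
        (∫ x in Set.Ioc (0:ℝ) 1, u x ^ 2 / a x) + (∫ x in Set.Ioc (0:ℝ) 1, u' x ^ 2) +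
          ∫ x in Set.Ioc (0:ℝ) 1, u'' x ^ 2) ∧
      ((∫ x in Set.Ioc (0:ℝ) 1, u x ^ 2 / a x) + (∫ x in Set.Ioc (0:ℝ) 1, u' x ^ 2) +
          (∫ x in Set.Ioc (0:ℝ) 1, u'' x ^ 2) ≤
        (1 + C) * ∫ x in Set.Ioc (0:ℝ) 1, u'' x ^ 2) := by
  obtain ⟨haC, ha0, hapos, K, hK0, hK2, ε, hε, hmono⟩ := ha
  set ε' : ℝ := min ε 1 with hε'def
  have hε'0 : 0 < ε' := lt_min hε one_pos
  have hε'1 : ε' ≤ 1 := min_le_right _ _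
  have hε'ε : ε' ≤ ε := min_le_left _ _
  have haε' : 0 < a ε' := hapos ε' ⟨hε'0, hε'1⟩
  -- minimum of a on [ε', 1]
  obtain ⟨x₀, hx₀mem, hx₀min⟩ := (isCompact_Icc.exists_isMinOn
    (Set.nonempty_Icc.2 hε'1) (haC.mono (Set.Icc_subset_Icc hε'0.le le_rfl)))
  set m : ℝ := a x₀ with hmdef
  have hm : 0 < m := hapos x₀ ⟨lt_of_lt_of_le hε'0 hx₀mem.1, hx₀mem.2⟩
  set M : ℝ := max (ε' ^ K / a ε') (1 / m) with hMdef
  have hM0 : 0 < M := lt_of_lt_of_le (by positivity) (le_max_right _ _)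
  refine ⟨M + 1, by linarith, ?_⟩
  intro u u' u'' hu
  obtain ⟨h''int, h2int, hu'rep, hurep, hu0, hu1, hu'0, hu'1, hwint⟩ := hu
  set B : ℝ := ∫ x in Set.Ioc (0:ℝ) 1, u'' x ^ 2 with hBdef
  set D : ℝ := ∫ x in Set.Ioc (0:ℝ) 1, |u'' x| with hDdef
  have hBnn : 0 ≤ B := setIntegral_nonneg measurableSet_Ioc fun x _ => sq_nonneg _
  have hDnn : 0 ≤ D := setIntegral_nonneg measurableSet_Ioc fun x _ => abs_nonneg _
  have h''Ioc : IntegrableOn u'' (Set.Ioc (0:ℝ) 1) :=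
    (intervalIntegrable_iff_integrableOn_Ioc_of_le zero_le_one).mp h''int
  have habs : IntegrableOn (fun x => |u'' x|) (Set.Ioc (0:ℝ) 1) := h''Ioc.abs
  have hvol : volume (Set.Ioc (0:ℝ) 1) = 1 := by simp
  have hvol_lt : volume (Set.Ioc (0:ℝ) 1) < ⊤ := by rw [hvol]; exact ENNReal.one_lt_top
  have hconst : ∀ c : ℝ, IntegrableOn (fun _ : ℝ => c) (Set.Ioc (0:ℝ) 1) :=
    fun c => integrableOn_const hvol_lt.ne
  have hconst_int : ∀ c : ℝ, (∫ _ in Set.Ioc (0:ℝ) 1, c) = c := by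
    intro c; rw [setIntegral_const, measureReal_def, hvol]; simp
  -- Cauchy–Schwarz: D ^ 2 ≤ B
  have hD2B : D ^ 2 ≤ B := by
    have key : 0 ≤ ∫ x in Set.Ioc (0:ℝ) 1, (|u'' x| - D) ^ 2 :=
      setIntegral_nonneg measurableSet_Ioc fun x _ => sq_nonneg _
    have hint1 : IntegrableOn (fun x => u'' x ^ 2 - 2 * D * |u'' x|) (Set.Ioc (0:ℝ) 1) :=
      h2int.sub (habs.const_mul (2 * D))
    have e1 : (∫ x in Set.Ioc (0:ℝ) 1, ((u'' x ^ 2 - 2 * D * |u'' x|) + D ^ 2))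
        = (∫ x in Set.Ioc (0:ℝ) 1, (u'' x ^ 2 - 2 * D * |u'' x|))
          + ∫ _ in Set.Ioc (0:ℝ) 1, D ^ 2 := integral_add hint1 (hconst _)
    have e2 : (∫ x in Set.Ioc (0:ℝ) 1, (u'' x ^ 2 - 2 * D * |u'' x|))
        = B - ∫ x in Set.Ioc (0:ℝ) 1, 2 * D * |u'' x| :=
      integral_sub h2int (habs.const_mul (2 * D))
    have e3 : (∫ x in Set.Ioc (0:ℝ) 1, 2 * D * |u'' x|) = 2 * D * D :=
      integral_const_mul (2 * D) fun x => |u'' x|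
    have expand : (∫ x in Set.Ioc (0:ℝ) 1, (|u'' x| - D) ^ 2)
        = B - 2 * D * D + D ^ 2 := by
      have heq : (fun x => (|u'' x| - D) ^ 2)
          = fun x => (u'' x ^ 2 - 2 * D * |u'' x|) + D ^ 2 := by
        funext x
        have h := sq_abs (u'' x)
        nlinarith [h]
      rw [heq, e1, e2, e3, hconst_int]
    nlinarith [key, expand]
  -- the primitive of u''
  set v : ℝ → ℝ := fun x => ∫ s in (0:ℝ)..x, u'' s with hvdef
  have hvcont : ContinuousOn v (Set.Icc (0:ℝ) 1) := by
    have := intervalIntegral.continuousOn_primitive_interval'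
      (μ := volume) (f := u'') (b₁ := (0:ℝ)) (b₂ := 1) h''int left_mem_uIcc
    rwa [Set.uIcc_of_le zero_le_one] at this
  have hu'eq : ∀ x ∈ Set.Icc (0:ℝ) 1, u' x = v x := by
    intro x hx; rw [hu'rep x hx, hu'0, zero_add]
  -- pointwise bound on u'
  have hu'bound : ∀ x ∈ Set.Icc (0:ℝ) 1, |u' x| ≤ D := by
    intro x hx
    rw [hu'eq x hx]
    calc |v x| ≤ ∫ s in (0:ℝ)..x, |u'' s| :=
          intervalIntegral.abs_integral_le_integral_abs hx.1
      _ = ∫ s in Set.Ioc (0:ℝ) x, |u'' s| := intervalIntegral.integral_of_le hx.1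
      _ ≤ D := setIntegral_mono_set habs
          (ae_of_all _ fun x => abs_nonneg (u'' x))
          ((Set.Ioc_subset_Ioc_right hx.2).eventuallyLE)
  -- integrability of u' and (u')^2 on (0,1]
  have hu'int : IntegrableOn u' (Set.Ioc (0:ℝ) 1) := by
    refine ((hvcont.integrableOn_Icc).mono_set Set.Ioc_subset_Icc_self).congr_fun
      (fun x hx => (hu'eq x (Set.Ioc_subset_Icc_self hx)).symm) measurableSet_Ioc
  have hu'sqint : IntegrableOn (fun x => u' x ^ 2) (Set.Ioc (0:ℝ) 1) := by
    refine (((hvcont.pow 2).integrableOn_Icc).mono_set Set.Ioc_subset_Icc_self).congr_fun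
      (fun x hx => by simp [hu'eq x (Set.Ioc_subset_Icc_self hx)]) measurableSet_Ioc
  -- ∫ (u')² ≤ B
  have hI2 : (∫ x in Set.Ioc (0:ℝ) 1, u' x ^ 2) ≤ B := by
    have h1 : (∫ x in Set.Ioc (0:ℝ) 1, u' x ^ 2) ≤ ∫ _ in Set.Ioc (0:ℝ) 1, B := by
      refine setIntegral_mono_on hu'sqint (hconst B) measurableSet_Ioc ?_
      intro x hx
      have h := hu'bound x (Set.Ioc_subset_Icc_self hx)
      nlinarith [sq_abs (u' x), hD2B, abs_nonneg (u' x)]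
    rwa [hconst_int] at h1
  -- pointwise bound on u
  have hubound : ∀ x ∈ Set.Icc (0:ℝ) 1, |u x| ≤ x * D := by
    intro x hx
    have hurepx := hurep x hx
    rw [hu0, zero_add] at hurepx
    have hu'intx : IntervalIntegrable u' volume 0 x :=
      (intervalIntegrable_iff_integrableOn_Ioc_of_le hx.1).mpr
        (hu'int.mono_set (Set.Ioc_subset_Ioc_right hx.2))
    calc |u x| = |∫ s in (0:ℝ)..x, u' s| := by rw [hurepx]
      _ ≤ ∫ s in (0:ℝ)..x, |u' s| := intervalIntegral.abs_integral_le_integral_abs hx.1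
      _ ≤ ∫ _ in (0:ℝ)..x, D := by
          refine intervalIntegral.integral_mono_on hx.1 hu'intx.abs
            intervalIntegrable_const ?_
          intro t ht
          exact hu'bound t ⟨ht.1, le_trans ht.2 hx.2⟩
      _ = x * D := by simp [mul_comm]
  -- pointwise bound on u²/a
  have husq : ∀ x ∈ Set.Ioc (0:ℝ) 1, u x ^ 2 / a x ≤ M * B := by
    intro x hx
    have hx0 : 0 < x := hx.1
    have hax : 0 < a x := hapos x hx
    have husq' : u x ^ 2 ≤ x ^ 2 * B := by
      have h := hubound x ⟨hx0.le, hx.2⟩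
      nlinarith [sq_abs (u x), hD2B, abs_nonneg (u x), hDnn, sq_nonneg x]
    by_cases hcase : x ≤ ε'
    · -- near 0 : use monotonicity of x^K / a x
      have hmono' : x ^ K / a x ≤ ε' ^ K / a ε' :=
        hmono ⟨hx0, le_trans hcase hε'ε⟩ ⟨hε'0, hε'ε⟩ hcase
      have hxK : (0:ℝ) < x ^ K := Real.rpow_pos_of_pos hx0 K
      have hx2K : x ^ (2 - K : ℝ) ≤ 1 :=
        Real.rpow_le_one hx0.le hx.2 (by linarith)
      have hx2 : x ^ (2:ℝ) = x ^ (2:ℕ) := by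
        rw [← Real.rpow_natCast x 2]; norm_num
      have hsplit : x ^ (2:ℕ) / x ^ K = x ^ (2 - K : ℝ) := by
        rw [← hx2, ← Real.rpow_sub hx0]
      -- u x ^ 2 / a x = (u x ^ 2 / x^K) * (x^K / a x)
      have key : u x ^ 2 / a x = (u x ^ 2 / x ^ K) * (x ^ K / a x) := by
        field_simp
      rw [key]
      have h1 : u x ^ 2 / x ^ K ≤ B := by
        calc u x ^ 2 / x ^ K ≤ (x ^ (2:ℕ) * B) / x ^ K := by gcongr
          _ = (x ^ (2:ℕ) / x ^ K) * B := by ring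
          _ = x ^ (2 - K : ℝ) * B := by rw [hsplit]
          _ ≤ 1 * B := by
              exact mul_le_mul_of_nonneg_right hx2K hBnn
          _ = B := one_mul B
      have h2 : x ^ K / a x ≤ M := le_trans hmono' (le_max_left _ _)
      have h3 : 0 ≤ x ^ K / a x := le_of_lt (div_pos hxK hax)
      have h4 : 0 ≤ u x ^ 2 / x ^ K := div_nonneg (sq_nonneg _) hxK.le
      calc (u x ^ 2 / x ^ K) * (x ^ K / a x) ≤ B * M :=
            mul_le_mul h1 h2 h3 hBnn
        _ = M * B := mul_comm _ _
    · -- away from 0 : a x ≥ m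
      push_neg at hcase
      have ham : m ≤ a x := hx₀min ⟨hcase.le, hx.2⟩
      have hx2le : x ^ 2 ≤ 1 := by nlinarith [hx.2, hx0.le]
      have hxB : x ^ 2 * B ≤ B := by
        calc x ^ 2 * B ≤ 1 * B := mul_le_mul_of_nonneg_right hx2le hBnn
          _ = B := one_mul B
      have husq'' : u x ^ 2 ≤ B := le_trans husq' hxB
      calc u x ^ 2 / a x ≤ B / m := div_le_div₀ hBnn husq'' hm ham
        _ = (1 / m) * B := by ring
        _ ≤ M * B := mul_le_mul_of_nonneg_right (le_max_right _ _) hBnn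
  -- ∫ u²/a ≤ M * B
  have hI1 : (∫ x in Set.Ioc (0:ℝ) 1, u x ^ 2 / a x) ≤ M * B := by
    have h1 : (∫ x in Set.Ioc (0:ℝ) 1, u x ^ 2 / a x) ≤ ∫ _ in Set.Ioc (0:ℝ) 1, M * B :=
      setIntegral_mono_on hwint (hconst _) measurableSet_Ioc husq
    rwa [hconst_int] at h1
  have hI1nn : 0 ≤ ∫ x in Set.Ioc (0:ℝ) 1, u x ^ 2 / a x :=
    setIntegral_nonneg measurableSet_Ioc fun x hx =>
      div_nonneg (sq_nonneg _) (hapos x hx).le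
  have hI2nn : 0 ≤ ∫ x in Set.Ioc (0:ℝ) 1, u' x ^ 2 :=
    setIntegral_nonneg measurableSet_Ioc fun x _ => sq_nonneg _
  exact ⟨by linarith, by linarith, by linarith⟩

end
end
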